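/- Let P̃₀ ≠ P̃₁ and let Λ be the feasible set of quadruples (π₀, π₁, P₀, P₁) with π₀ + π₁ < 1 satisfying the contamination model. The quantity π₀ + π₁ attains its maximum over Λ uniquely at the mutually irreducible solution (π₀*, π₁*, P₀*, P₁*), and the same quadruple uniquely maximizes ‖P₀ - P₁‖_TV over Λ. -/

import Mathlib

open MeasureTheory

/-- The mixture `(1-a)·P + a·Q` of two measures. -/
noncomputable def mix {X : Type*} [MeasurableSpace X] (a : ℝ) (P Q : Measure X) :
    Measure X :=
  ENNReal.ofReal (1 - a) • P + ENNReal.ofReal a • Q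

/-- `G` is irreducible with respect to `H`: no decomposition `G = γ·H + (1-γ)·F'`
with `F'` a probability measure and `0 < γ ≤ 1`. -/
def Irred {X : Type*} [MeasurableSpace X] (G H : Measure X) : Prop :=
  ¬ ∃ (γ : ℝ) (F' : Measure X), IsProbabilityMeasure F' ∧ 0 < γ ∧ γ ≤ 1 ∧
      G = mix γ F' H

/-- Mutual irreducibility. -/
def MutIrred {X : Type*} [MeasurableSpace X] (P Q : Measure X) : Prop :=
  Irred P Q ∧ Irred Q P

/-- The set of feasible mixture proportions of `H` in `F`. -/
def nuSet {X : Type*} [MeasurableSpace X] (F H : Measure X) : Set ℝ :=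
  {α | α ∈ Set.Icc (0:ℝ) 1 ∧
    ∃ G' : Measure X, IsProbabilityMeasure G' ∧ F = mix α G' H}

/-- `ν*(F,H)`: the maximal proportion of `H` in `F`. -/
noncomputable def nuStar {X : Type*} [MeasurableSpace X] (F H : Measure X) : ℝ :=
  sSup (nuSet F H)

/-- Feasible quadruples `(π₀, π₁, P₀, P₁)` for the contamination model with observed
contaminated distributions `Pt₀, Pt₁`. -/
def Feas {X : Type*} [MeasurableSpace X] (Pt₀ Pt₁ : Measure X)
    (q : ℝ × ℝ × Measure X × Measure X) : Prop :=
  0 ≤ q.1 ∧ 0 ≤ q.2.1 ∧ q.1 + q.2.1 < 1 ∧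
  IsProbabilityMeasure q.2.2.1 ∧ IsProbabilityMeasure q.2.2.2 ∧
  Pt₀ = mix q.1 q.2.2.1 q.2.2.2 ∧ Pt₁ = mix q.2.1 q.2.2.2 q.2.2.1

/-- Total variation distance between two measures. -/
noncomputable def tvDist {X : Type*} [MeasurableSpace X] (P Q : Measure X) : ℝ :=
  ⨆ A : {A : Set X // MeasurableSet A}, |(P A).toReal - (Q A).toReal|

/-!
For every feasible quadruple, `(1 - π₁) P̃₀ - π₀ P̃₁ = (1 - π₀ - π₁) P₀`. Expanding the left side
in a second feasible quadruple `(σ₀, σ₁, Q₀, Q₁)` exhibits `Q₀` as a mixture of `P₀` and `Q₁` in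
which `Q₁` carries a weight proportional to `π₀ (1 - σ₁) - σ₀ (1 - π₁)`. If `Q₀` is irreducible
with respect to `Q₁` this weight is nonpositive, and symmetrically for `Q₁`. The two weights add
up to `(π₀ + π₁) - (σ₀ + σ₁)`, and both vanish only when the two quadruples coincide.
Finally `‖P̃₀ - P̃₁‖_TV = (1 - π₀ - π₁) ‖P₀ - P₁‖_TV` for every feasible quadruple, so a larger
`π₀ + π₁` forces a larger distance `‖P₀ - P₁‖_TV`.
-/

section

variable {X : Type*} [MeasurableSpace X]

lemma measure_ext_of_real {P Q : Measure X} [IsFiniteMeasure P] [IsFiniteMeasure Q]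
    (h : ∀ A, MeasurableSet A → P.real A = Q.real A) : P = Q :=
  Measure.ext fun A hA => (measureReal_eq_measureReal_iff).1 (h A hA)

instance (a : ℝ) (P Q : Measure X) [IsFiniteMeasure P] [IsFiniteMeasure Q] :
    IsFiniteMeasure (mix a P Q) :=
  ⟨by simp only [mix, Measure.add_apply, Measure.smul_apply, smul_eq_mul]; finiteness⟩

lemma mix_real_apply {a : ℝ} (ha₀ : 0 ≤ a) (ha₁ : a ≤ 1) (P Q : Measure X)
    [IsFiniteMeasure P] [IsFiniteMeasure Q] (A : Set X) :
    (mix a P Q).real A = (1 - a) * P.real A + a * Q.real A := by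
  simp only [Measure.real, mix, Measure.add_apply, Measure.smul_apply, smul_eq_mul]
  rw [ENNReal.toReal_add (by finiteness) (by finiteness), ENNReal.toReal_mul,
    ENNReal.toReal_mul, ENNReal.toReal_ofReal (by linarith), ENNReal.toReal_ofReal ha₀]

lemma Irred.nonpos_of_real_eq {G H F : Measure X} (hG : Irred G H) [IsFiniteMeasure G]
    [IsFiniteMeasure H] [IsProbabilityMeasure F] {a b : ℝ} (ha : 0 ≤ a)
    (h : ∀ A, MeasurableSet A → (a + b) * G.real A = a * F.real A + b * H.real A) :
    b ≤ 0 := by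
  by_contra! hb
  have hab : 0 < a + b := by linarith
  have hγ₀ : 0 < b / (a + b) := div_pos hb hab
  have hγ₁ : b / (a + b) ≤ 1 := (div_le_one hab).2 (by linarith)
  refine hG ⟨b / (a + b), F, inferInstance, hγ₀, hγ₁, measure_ext_of_real fun A hA => ?_⟩
  rw [mix_real_apply hγ₀.le hγ₁]
  field_simp
  linear_combination h A hA

lemma tvDist_pos {P Q : Measure X} [IsFiniteMeasure P] [IsFiniteMeasure Q] (hne : P ≠ Q) :
    0 < tvDist P Q := by
  have hbdd : BddAbove (Set.range fun A : {A : Set X // MeasurableSet A} =>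
      |P.real A - Q.real A|) := by
    refine ⟨P.real Set.univ + Q.real Set.univ, ?_⟩
    rintro _ ⟨A, rfl⟩
    have hP := measureReal_mono (μ := P) (Set.subset_univ A.1)
    have hQ := measureReal_mono (μ := Q) (Set.subset_univ A.1)
    rw [abs_sub_le_iff]
    constructor <;> linarith [measureReal_nonneg (μ := P) (s := A.1),
      measureReal_nonneg (μ := Q) (s := A.1)]
  obtain ⟨A, hA, hPQ⟩ : ∃ A, MeasurableSet A ∧ P.real A ≠ Q.real A := by
    by_contra! h
    exact hne (measure_ext_of_real h)
  exact (abs_pos.2 (sub_ne_zero.2 hPQ)).trans_le (le_ciSup hbdd ⟨A, hA⟩)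

namespace Feas

variable {Pt₀ Pt₁ P₀ P₁ Q₀ Q₁ : Measure X} {π₀ π₁ σ₀ σ₁ : ℝ}

lemma symm (h : Feas Pt₀ Pt₁ (π₀, π₁, P₀, P₁)) : Feas Pt₁ Pt₀ (π₁, π₀, P₁, P₀) := by
  obtain ⟨h₀, h₁, hsum, hP₀, hP₁, e₀, e₁⟩ := h
  exact ⟨h₁, h₀, by linarith, hP₁, hP₀, e₁, e₀⟩

lemma real_comparison (h : Feas Pt₀ Pt₁ (π₀, π₁, P₀, P₁))
    (hs : Feas Pt₀ Pt₁ (σ₀, σ₁, Q₀, Q₁)) (A : Set X) :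
    (1 - π₀ - π₁ + (π₀ * (1 - σ₁) - σ₀ * (1 - π₁))) * Q₀.real A =
      (1 - π₀ - π₁) * P₀.real A + (π₀ * (1 - σ₁) - σ₀ * (1 - π₁)) * Q₁.real A := by
  obtain ⟨h₀, h₁, hsum, hP₀, hP₁, e₀, e₁⟩ := h
  obtain ⟨g₀, g₁, gsum, hQ₀, hQ₁, f₀, f₁⟩ := hs
  have E₀ := congrArg (·.real A) (e₀.symm.trans f₀)
  have E₁ := congrArg (·.real A) (e₁.symm.trans f₁)
  simp only [mix_real_apply h₀ (by linarith), mix_real_apply h₁ (by linarith),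
    mix_real_apply g₀ (by linarith), mix_real_apply g₁ (by linarith)] at E₀ E₁
  linear_combination π₀ * E₁ - (1 - π₁) * E₀

lemma mul_le_mul_of_irred (h : Feas Pt₀ Pt₁ (π₀, π₁, P₀, P₁))
    (hs : Feas Pt₀ Pt₁ (σ₀, σ₁, Q₀, Q₁)) (hirr : Irred Q₀ Q₁) :
    π₀ * (1 - σ₁) ≤ σ₀ * (1 - π₁) := by
  have hcmp := h.real_comparison hs
  obtain ⟨-, -, hsum, hP₀, -, -⟩ := h
  obtain ⟨-, -, -, hQ₀, hQ₁, -⟩ := hs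
  have := hirr.nonpos_of_real_eq (F := P₀) (by linarith) fun A _ => hcmp A
  linarith

lemma fst_eq_of_mul_eq (h : Feas Pt₀ Pt₁ (π₀, π₁, P₀, P₁))
    (hs : Feas Pt₀ Pt₁ (σ₀, σ₁, Q₀, Q₁)) (heq : π₀ * (1 - σ₁) = σ₀ * (1 - π₁)) :
    P₀ = Q₀ := by
  have hcmp := h.real_comparison hs
  obtain ⟨-, -, hsum, hP₀, -, -⟩ := h
  obtain ⟨-, -, -, hQ₀, -⟩ := hs
  refine measure_ext_of_real fun A _ => ?_
  have hA := hcmp A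
  rw [heq, sub_self, add_zero, zero_mul, add_zero] at hA
  exact (mul_left_cancel₀ (by linarith) hA).symm

theorem sum_lt_of_mutIrred (h : Feas Pt₀ Pt₁ (π₀, π₁, P₀, P₁))
    (hs : Feas Pt₀ Pt₁ (σ₀, σ₁, Q₀, Q₁)) (hirr : MutIrred Q₀ Q₁)
    (hne : (π₀, π₁, P₀, P₁) ≠ (σ₀, σ₁, Q₀, Q₁)) :
    π₀ + π₁ < σ₀ + σ₁ := by
  have k₀ := h.mul_le_mul_of_irred hs hirr.1
  have k₁ := h.symm.mul_le_mul_of_irred hs.symm hirr.2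
  refine lt_of_le_of_ne (by linear_combination k₀ + k₁) fun hsum => hne ?_
  have e₀ : π₀ * (1 - σ₁) = σ₀ * (1 - π₁) := le_antisymm k₀ (by linear_combination k₁ - hsum)
  have e₁ : π₁ * (1 - σ₀) = σ₁ * (1 - π₀) := le_antisymm k₁ (by linear_combination k₀ - hsum)
  have hπ₀ : π₀ = σ₀ := by
    have hprod : (π₀ - σ₀) * (1 - (π₀ + π₁)) = 0 := by linear_combination e₀ - π₀ * hsum
    have hsum₁ : π₀ + π₁ < 1 := h.2.2.1
    exact sub_eq_zero.1 ((mul_eq_zero.1 hprod).resolve_right (by linarith))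
  have hπ₁ : π₁ = σ₁ := by linarith
  rw [hπ₀, hπ₁, h.fst_eq_of_mul_eq hs e₀, h.symm.fst_eq_of_mul_eq hs.symm e₁]

lemma tvDist_eq (h : Feas Pt₀ Pt₁ (π₀, π₁, P₀, P₁)) :
    tvDist Pt₀ Pt₁ = (1 - π₀ - π₁) * tvDist P₀ P₁ := by
  obtain ⟨h₀, h₁, hsum, hP₀, hP₁, rfl, rfl⟩ := h
  rw [tvDist, tvDist, Real.mul_iSup_of_nonneg (by linarith)]
  refine iSup_congr fun A => ?_
  simp only [← measureReal_def]
  rw [mix_real_apply h₀ (by linarith), mix_real_apply h₁ (by linarith),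
    ← abs_of_nonneg (by linarith : (0 : ℝ) ≤ 1 - π₀ - π₁), ← abs_mul]
  ring_nf

theorem tvDist_lt_of_sum_lt [IsFiniteMeasure Pt₀] [IsFiniteMeasure Pt₁]
    (h : Feas Pt₀ Pt₁ (π₀, π₁, P₀, P₁)) (hs : Feas Pt₀ Pt₁ (σ₀, σ₁, Q₀, Q₁))
    (hne : Pt₀ ≠ Pt₁) (hlt : π₀ + π₁ < σ₀ + σ₁) :
    tvDist P₀ P₁ < tvDist Q₀ Q₁ := by
  have hT := tvDist_pos hne
  have hP := h.tvDist_eq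
  have hQ := hs.tvDist_eq
  have hσ₁ : σ₀ + σ₁ < 1 := hs.2.2.1
  have hσ : 0 < 1 - σ₀ - σ₁ := by linarith
  have hPpos : 0 < tvDist P₀ P₁ := pos_of_mul_pos_right (hP ▸ hT) (by linarith)
  refine lt_of_mul_lt_mul_left ?_ hσ.le
  calc (1 - σ₀ - σ₁) * tvDist P₀ P₁ < (1 - π₀ - π₁) * tvDist P₀ P₁ :=
        mul_lt_mul_of_pos_right (by linarith) hPpos
    _ = (1 - σ₀ - σ₁) * tvDist Q₀ Q₁ := by rw [← hP, hQ]

end Feas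

end

theorem mutually_irreducible_maximal_denoising {X : Type*} [MeasurableSpace X]
    (Pt₀ Pt₁ : Measure X) [IsProbabilityMeasure Pt₀] [IsProbabilityMeasure Pt₁]
    (hne : Pt₀ ≠ Pt₁)
    (qs : ℝ × ℝ × Measure X × Measure X)
    (hqs : Feas Pt₀ Pt₁ qs ∧ MutIrred qs.2.2.1 qs.2.2.2) :
    ∀ q : ℝ × ℝ × Measure X × Measure X, Feas Pt₀ Pt₁ q → q ≠ qs →
      q.1 + q.2.1 < qs.1 + qs.2.1 ∧
      tvDist q.2.2.1 q.2.2.2 < tvDist qs.2.2.1 qs.2.2.2 := by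
  obtain ⟨σ₀, σ₁, Q₀, Q₁⟩ := qs
  obtain ⟨hs, hirr⟩ := hqs
  rintro ⟨π₀, π₁, P₀, P₁⟩ h hqne
  have hlt := h.sum_lt_of_mutIrred hs hirr hqne
  exact ⟨hlt, h.tvDist_lt_of_sum_lt hs hne hlt⟩
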